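/- Let M be a monomial ideal in S = k[x₁,…,x_n] with lcm-lattice L_M. Then for every m ∈ L_M, the projective dimension of S/(M_{≤m}) is at most rk(m); in particular projdim(S/M) ≤ rk(L_M). -/

import Mathlib

/-!
Induction on the number of generators of a monomial ideal `I`. If `1 ∈ I` or `I = 0` there is
nothing to do; otherwise pick a generator `x^u ≠ 1` and let `Q` be generated by the others, so
that `I = Q + (x^u)`. Multiplication by `x^u` gives a short exact sequence
`0 → S/(Q : x^u) → S/Q → S/I → 0`, and the mapping cone of a lift of it to free resolutions
resolves `S/I` in length `max (len S/Q) (len S/(Q : x^u) + 1)`.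

Both lengths are controlled by the lcm lattice of `I`. A chain from `1` to `lcm Q` in the lattice
of `Q` either ends at `lcm I` or can be extended by it. The colon ideal `(Q : x^u)` is generated by the
`x^((v ⊔ u) - u)`, and translating its lcm lattice by `u` lands in the lattice of `I`; prepending
`1` to a translated chain shows that its rank is at most `rk (lcm I) - 1`.
-/

open MvPolynomial

structure FinFreeResolution (R : Type*) [CommRing R] (M : Type*) [AddCommGroup M] [Module R M]
    (N : ℕ) where
  rank : ℕ → ℕ
  d : ∀ i, (Fin (rank (i + 1)) → R) →ₗ[R] (Fin (rank i) → R)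
  π : (Fin (rank 0) → R) →ₗ[R] M
  rank_eq_zero : ∀ i, N < i → rank i = 0
  surjective_π : Function.Surjective π
  exact_π : Function.Exact (d 0) π
  exact_d : ∀ i, Function.Exact (d (i + 1)) (d i)

theorem exact_of_subsingleton {R X Y Z : Type*} [Semiring R] [AddCommMonoid X] [Module R X]
    [AddCommMonoid Y] [Module R Y] [AddCommMonoid Z] [Module R Z] [Subsingleton Y]
    (f : X →ₗ[R] Y) (g : Y →ₗ[R] Z) : Function.Exact f g := fun y => by
  rw [Subsingleton.elim y 0]
  exact ⟨fun _ => ⟨0, map_zero f⟩, fun _ => map_zero g⟩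

namespace FinFreeResolution

variable {R : Type*} [CommRing R] {M M' : Type*} [AddCommGroup M] [Module R M]
  [AddCommGroup M'] [Module R M'] {N N' : ℕ}

def ofLE (F : FinFreeResolution R M N) (h : N ≤ N') : FinFreeResolution R M N' :=
  { F with rank_eq_zero := fun i hi => F.rank_eq_zero i (h.trans_lt hi) }

def congr (F : FinFreeResolution R M N) (e : M ≃ₗ[R] M') : FinFreeResolution R M' N :=
  { F with
    π := e ∘ₗ F.π
    surjective_π := e.surjective.comp F.surjective_π
    exact_π := e.postcomp_exact_iff_exact.2 F.exact_π }

def ofSubsingleton [Subsingleton M] : FinFreeResolution R M 0 where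
  rank _ := 0
  d _ := 0
  π := 0
  rank_eq_zero _ _ := rfl
  surjective_π _ := ⟨0, Subsingleton.elim _ _⟩
  exact_π := exact_of_subsingleton _ _
  exact_d _ := exact_of_subsingleton _ _

variable (R) in
def self : FinFreeResolution R R 0 where
  rank
    | 0 => 1
    | _ + 1 => 0
  d _ := 0
  π := LinearMap.proj 0
  rank_eq_zero
    | _ + 1, _ => rfl
  surjective_π x := ⟨fun _ => x, rfl⟩
  exact_π y := by
    simp [funext_iff, Fin.forall_fin_one, eq_comm]
  exact_d _ := exact_of_subsingleton _ _

def ofLinearEquiv {X : ℕ → Type*} [∀ i, AddCommGroup (X i)] [∀ i, Module R (X i)]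
    (rank : ℕ → ℕ) (e : ∀ i, (Fin (rank i) → R) ≃ₗ[R] X i)
    (d : ∀ i, X (i + 1) →ₗ[R] X i) (π : X 0 →ₗ[R] M)
    (rank_eq_zero : ∀ i, N < i → rank i = 0) (surjective_π : Function.Surjective π)
    (exact_π : Function.Exact (d 0) π) (exact_d : ∀ i, Function.Exact (d (i + 1)) (d i)) :
    FinFreeResolution R M N where
  rank := rank
  d i := (e i).symm.toLinearMap ∘ₗ d i ∘ₗ (e (i + 1)).toLinearMap
  π := π ∘ₗ (e 0).toLinearMap
  rank_eq_zero := rank_eq_zero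
  surjective_π := surjective_π.comp (e 0).surjective
  exact_π := by
    rw [← LinearMap.comp_assoc, LinearEquiv.precomp_exact_iff_exact]
    exact (LinearEquiv.conj_symm_exact_iff_exact _ _ (e 0)).2 exact_π
  exact_d i := by
    rw [← LinearMap.comp_assoc, LinearEquiv.precomp_exact_iff_exact,
      LinearEquiv.postcomp_exact_iff_exact]
    exact (LinearEquiv.conj_symm_exact_iff_exact _ _ (e (i + 1))).2 (exact_d i)

theorem exists_matrix (F : FinFreeResolution R M N) :
    ∃ (rnk : ℕ → ℕ) (D : ∀ i, Matrix (Fin (rnk i)) (Fin (rnk (i + 1))) R)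
      (π : (Fin (rnk 0) → R) →ₗ[R] M),
      (∀ i, N < i → rnk i = 0) ∧ Function.Surjective π ∧
      LinearMap.ker π = LinearMap.range (D 0).mulVecLin ∧
      ∀ i, LinearMap.ker (D i).mulVecLin = LinearMap.range (D (i + 1)).mulVecLin := by
  refine ⟨F.rank, fun i => LinearMap.toMatrix' (F.d i), F.π, F.rank_eq_zero, F.surjective_π,
    ?_, fun i => ?_⟩ <;>
  simp only [← Matrix.toLin'_apply', Matrix.toLin'_toMatrix']
  · exact F.exact_π.linearMap_ker_eq
  · exact (F.exact_d i).linearMap_ker_eq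

end FinFreeResolution

section ChainMap

open LinearMap

variable {R : Type*} [CommRing R]
  {F₀ F₁ F₂ G₀ G₁ G₂ : Type*} [AddCommGroup F₀] [Module R F₀] [AddCommGroup F₁] [Module R F₁]
  [AddCommGroup F₂] [Module R F₂] [AddCommGroup G₀] [Module R G₀] [AddCommGroup G₁] [Module R G₁]
  [AddCommGroup G₂] [Module R G₂]

theorem Module.Projective.exists_comp_eq_of_range_le [Module.Projective R G₀] {g : G₀ →ₗ[R] F₀}
    {h : F₁ →ₗ[R] F₀} (hgh : range g ≤ range h) : ∃ l : G₀ →ₗ[R] F₁, h ∘ₗ l = g := by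
  obtain ⟨l, hl⟩ := Module.projective_lifting_property h.rangeRestrict
    (g.codRestrict (range h) fun x => hgh (mem_range_self g x)) h.surjective_rangeRestrict
  refine ⟨l, ?_⟩
  ext x
  simpa using congrArg (fun f : G₀ →ₗ[R] range h => (f x : F₀)) hl

theorem exists_lift_of_exact [Module.Projective R G₂] {dF₂ : F₂ →ₗ[R] F₁} {dF₁ : F₁ →ₗ[R] F₀}
    (hF : Function.Exact dF₂ dF₁) {dG₂ : G₂ →ₗ[R] G₁} {dG₁ : G₁ →ₗ[R] G₀}
    (hG : dG₁ ∘ₗ dG₂ = 0) {f₁ : G₁ →ₗ[R] F₁} {f₀ : G₀ →ₗ[R] F₀} (hf : dF₁ ∘ₗ f₁ = f₀ ∘ₗ dG₁) :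
    ∃ f₂ : G₂ →ₗ[R] F₂, dF₂ ∘ₗ f₂ = f₁ ∘ₗ dG₂ := by
  refine Module.Projective.exists_comp_eq_of_range_le ?_
  rintro _ ⟨z, rfl⟩
  rw [← hF.linearMap_ker_eq, mem_ker, LinearMap.comp_apply, ← LinearMap.comp_apply dF₁, hf,
    LinearMap.comp_apply, ← LinearMap.comp_apply dG₁, hG, LinearMap.zero_apply, map_zero]

end ChainMap

theorem FinFreeResolution.exists_chainMap {R M M' : Type*} [CommRing R] [AddCommGroup M]
    [Module R M] [AddCommGroup M'] [Module R M'] {NG NF : ℕ} (G : FinFreeResolution R M NG)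
    (F : FinFreeResolution R M' NF) (φ : M →ₗ[R] M') :
    ∃ f : ∀ i, (Fin (G.rank i) → R) →ₗ[R] (Fin (F.rank i) → R),
      F.π ∘ₗ f 0 = φ ∘ₗ G.π ∧ ∀ i, F.d i ∘ₗ f (i + 1) = f i ∘ₗ G.d i := by
  obtain ⟨f₀, hf₀⟩ := Module.projective_lifting_property F.π (φ ∘ₗ G.π) F.surjective_π
  obtain ⟨f₁, hf₁⟩ := exists_lift_of_exact F.exact_π G.exact_π.linearMap_comp_eq_zero hf₀
  let Square (i : ℕ) := {p : ((Fin (G.rank i) → R) →ₗ[R] (Fin (F.rank i) → R)) ×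
      ((Fin (G.rank (i + 1)) → R) →ₗ[R] (Fin (F.rank (i + 1)) → R)) //
    F.d i ∘ₗ p.2 = p.1 ∘ₗ G.d i}
  choose next hnext using fun i (p : Square i) =>
    exists_lift_of_exact (F.exact_d i) (G.exact_d i).linearMap_comp_eq_zero p.2
  -- consecutive squares share a map definitionally, so they glue to a chain map
  let squares (i : ℕ) : Square i :=
    Nat.rec ⟨(f₀, f₁), hf₁⟩ (fun i p => ⟨(p.1.2, next i p), hnext i p⟩) i
  exact ⟨fun i => (squares i).1.1, hf₀, fun i => (squares i).2⟩

section MappingCone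

open LinearMap

variable {R : Type*} [CommRing R]
  {F₀ F₁ F₂ G₀ G₁ G₂ M M' M'' Z : Type*} [AddCommGroup F₀] [Module R F₀] [AddCommGroup F₁]
  [Module R F₁] [AddCommGroup F₂] [Module R F₂] [AddCommGroup G₀] [Module R G₀]
  [AddCommGroup G₁] [Module R G₁] [AddCommGroup G₂] [Module R G₂] [AddCommGroup M] [Module R M]
  [AddCommGroup M'] [Module R M'] [AddCommGroup M''] [Module R M''] [AddCommGroup Z] [Module R Z]

def coneDiff (dF : F₁ →ₗ[R] F₀) (f : G₁ →ₗ[R] F₀) (dG : G₁ →ₗ[R] G₀) :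
    F₁ × G₁ →ₗ[R] F₀ × G₀ :=
  (dF ∘ₗ fst R F₁ G₁ + f ∘ₗ snd R F₁ G₁).prod (-(dG ∘ₗ snd R F₁ G₁))

@[simp]
theorem coneDiff_apply (dF : F₁ →ₗ[R] F₀) (f : G₁ →ₗ[R] F₀) (dG : G₁ →ₗ[R] G₀) (x : F₁)
    (y : G₁) : coneDiff dF f dG (x, y) = (dF x + f y, -dG y) :=
  rfl

theorem exact_coneDiff {dF₂ : F₂ →ₗ[R] F₁} {dF₁ : F₁ →ₗ[R] F₀} {dG₂ : G₂ →ₗ[R] G₁}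
    {dG₁ : G₁ →ₗ[R] G₀} {f₂ : G₂ →ₗ[R] F₁} {f₁ : G₁ →ₗ[R] F₀} (hF : Function.Exact dF₂ dF₁)
    (hG : Function.Exact dG₂ dG₁) (hf : dF₁ ∘ₗ f₂ = f₁ ∘ₗ dG₂) :
    Function.Exact (coneDiff dF₂ f₂ dG₂) (coneDiff dF₁ f₁ dG₁) := by
  have hf' (z : G₂) : dF₁ (f₂ z) = f₁ (dG₂ z) := LinearMap.congr_fun hf z
  rintro ⟨x, y⟩
  simp only [coneDiff_apply, Prod.mk_eq_zero, neg_eq_zero, Set.mem_range, Prod.exists,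
    Prod.mk.injEq]
  constructor
  · rintro ⟨hxy, hy⟩
    obtain ⟨z, rfl⟩ := (hG y).1 hy
    obtain ⟨w, hw⟩ := (hF (x + f₂ z)).1 (by rw [map_add, hf', hxy])
    exact ⟨w, -z, by simp [hw], by simp⟩
  · rintro ⟨w, z, rfl, rfl⟩
    simp [hF.apply_apply_eq_zero, hG.apply_apply_eq_zero, hf']

variable {dF₁ : F₁ →ₗ[R] F₀} {πF : F₀ →ₗ[R] M'} {πG : G₀ →ₗ[R] M} {f₀ : G₀ →ₗ[R] F₀}
  {φ : M →ₗ[R] M'}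

/-- In degree `1` the cone forgets the augmentation `πG`; injectivity of `φ` recovers it. -/
theorem exact_coneDiff_zero {dF₂ : F₂ →ₗ[R] F₁} {dG₁ : G₁ →ₗ[R] G₀} {f₁ : G₁ →ₗ[R] F₁}
    (hF : Function.Exact dF₂ dF₁) (hπF : Function.Exact dF₁ πF) (hπG : Function.Exact dG₁ πG)
    (hf₁ : dF₁ ∘ₗ f₁ = f₀ ∘ₗ dG₁) (hf₀ : πF ∘ₗ f₀ = φ ∘ₗ πG) (hφ : Function.Injective φ) :
    Function.Exact (coneDiff dF₂ f₁ dG₁) (coneDiff dF₁ f₀ (0 : G₀ →ₗ[R] Z)) := by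
  intro c
  rw [← exact_coneDiff hF hπG hf₁ c]
  obtain ⟨x, y⟩ := c
  simp only [coneDiff_apply, LinearMap.zero_apply, neg_zero, Prod.mk_eq_zero, and_true,
    neg_eq_zero, iff_self_and]
  intro hxy
  apply hφ
  rw [map_zero, ← LinearMap.comp_apply, ← hf₀, LinearMap.comp_apply,
    eq_neg_of_add_eq_zero_right hxy, map_neg, hπF.apply_apply_eq_zero, neg_zero]

theorem exact_coneDiff_fst [Subsingleton Z] {ρ : M' →ₗ[R] M''}
    (hπF : Function.Exact dF₁ πF) (hπG : Function.Surjective πG) (hf₀ : πF ∘ₗ f₀ = φ ∘ₗ πG)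
    (hφρ : Function.Exact φ ρ) :
    Function.Exact (coneDiff dF₁ f₀ (0 : G₀ →ₗ[R] Z)) (ρ ∘ₗ πF ∘ₗ fst R F₀ Z) := by
  have hf₀' (y : G₀) : πF (f₀ y) = φ (πG y) := LinearMap.congr_fun hf₀ y
  rintro ⟨x, z⟩
  obtain rfl := Subsingleton.elim z 0
  simp only [LinearMap.comp_apply, fst_apply, Set.mem_range, Prod.exists, coneDiff_apply,
    LinearMap.zero_apply, neg_zero, Prod.mk.injEq, and_true]
  constructor
  · intro hx
    obtain ⟨a, ha⟩ := (hφρ _).1 hx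
    obtain ⟨y, rfl⟩ := hπG a
    obtain ⟨w, hw⟩ := (hπF (x - f₀ y)).1 (by rw [map_sub, hf₀', ha, sub_self])
    exact ⟨w, y, by rw [hw, sub_add_cancel]⟩
  · rintro ⟨w, y, rfl⟩
    rw [map_add, hπF.apply_apply_eq_zero, zero_add, hf₀', hφρ.apply_apply_eq_zero]

/-- The mapping cone `F_i × G_{i-1}` of a lift `G → F` of `φ`, augmented by `ρ ∘ F.π`. -/
theorem FinFreeResolution.nonempty_of_exact {NG NF : ℕ} (G : FinFreeResolution R M NG)
    (F : FinFreeResolution R M' NF) {ρ : M' →ₗ[R] M''} (hφ : Function.Injective φ)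
    (hρ : Function.Surjective ρ) (hφρ : Function.Exact φ ρ) :
    Nonempty (FinFreeResolution R M'' (max NF (NG + 1))) := by
  obtain ⟨f, hf₀, hf⟩ := G.exists_chainMap F φ
  let shiftRank : ℕ → ℕ
    | 0 => 0
    | i + 1 => G.rank i
  let dG : ∀ i, (Fin (shiftRank (i + 1)) → R) →ₗ[R] (Fin (shiftRank i) → R)
    | 0 => 0
    | i + 1 => G.d i
  refine ⟨ofLinearEquiv (fun i => F.rank i + shiftRank i)
    (fun i => (LinearEquiv.funCongrLeft R R finSumFinEquiv).trans
      (LinearEquiv.sumArrowLequivProdArrow _ _ R R))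
    (fun i => coneDiff (F.d i) (f i) (dG i)) (ρ ∘ₗ F.π ∘ₗ fst R _ _) ?_
    (hρ.comp F.surjective_π |>.comp fst_surjective)
    (exact_coneDiff_fst F.exact_π G.surjective_π hf₀ hφρ) ?_⟩
  · rintro (_ | i) hi
    · omega
    · simp only [shiftRank, F.rank_eq_zero (i + 1) (by omega), G.rank_eq_zero i (by omega)]
  · rintro (_ | i)
    · exact exact_coneDiff_zero (F.exact_d 0) F.exact_π G.exact_π (hf 0) hf₀ hφ
    · exact exact_coneDiff (F.exact_d (i + 1)) (G.exact_d i) (hf (i + 1))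

end MappingCone

theorem Ideal.exists_exact_quotient_colon {R : Type*} [CommRing R] (Q : Ideal R) (w : R) :
    ∃ (φ : (R ⧸ Q.colon {w}) →ₗ[R] R ⧸ Q) (ρ : R ⧸ Q →ₗ[R] R ⧸ (Q ⊔ Ideal.span {w})),
      Function.Injective φ ∧ Function.Surjective ρ ∧ Function.Exact φ ρ := by
  have hcolon : Q.colon {w} ≤ Submodule.comap (LinearMap.mulRight R w) Q := fun x hx => by
    rw [Submodule.mem_comap, LinearMap.mulRight_apply, ← smul_eq_mul]
    exact Submodule.mem_colon_singleton.1 hx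
  refine ⟨Submodule.mapQ _ Q (LinearMap.mulRight R w) hcolon,
    Submodule.factor le_sup_left, ?_, ?_, ?_⟩
  · rw [← LinearMap.ker_eq_bot, LinearMap.ker_eq_bot']
    intro x hx
    obtain ⟨x, rfl⟩ := Submodule.Quotient.mk_surjective _ x
    rw [Submodule.mapQ_apply, Submodule.Quotient.mk_eq_zero] at hx
    rwa [Submodule.Quotient.mk_eq_zero, Submodule.mem_colon_singleton]
  · intro x
    obtain ⟨x, rfl⟩ := Submodule.Quotient.mk_surjective _ x
    exact ⟨Submodule.Quotient.mk x, rfl⟩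
  · intro x
    obtain ⟨x, rfl⟩ := Submodule.Quotient.mk_surjective _ x
    rw [Submodule.factor, Submodule.mapQ_apply, LinearMap.id_apply, Submodule.Quotient.mk_eq_zero,
      Submodule.mem_sup]
    constructor
    · rintro ⟨q, hq, _, hs, rfl⟩
      obtain ⟨t, rfl⟩ := Submodule.mem_span_singleton.1 hs
      refine ⟨Submodule.Quotient.mk t, ?_⟩
      rw [Submodule.mapQ_apply, Submodule.Quotient.eq, LinearMap.mulRight_apply, ← smul_eq_mul,
        sub_add_cancel_right]
      exact neg_mem hq
    · rintro ⟨y, hy⟩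
      obtain ⟨t, rfl⟩ := Submodule.Quotient.mk_surjective _ y
      rw [Submodule.mapQ_apply, Submodule.Quotient.eq, LinearMap.mulRight_apply] at hy
      exact ⟨x - t * w, by simpa [neg_sub] using neg_mem hy, t * w,
        Submodule.mem_span_singleton.2 ⟨t, rfl⟩, sub_add_cancel x _⟩

theorem MvPolynomial.support_mul_monomial_one {σ R : Type*} [CommSemiring R]
    (p : MvPolynomial σ R) (s : σ →₀ ℕ) :
    (p * monomial s 1).support = p.support.map (addRightEmbedding s) :=
  AddMonoidAlgebra.support_coeff_mul_single p 1 (by simp) s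

section MonomialIdeal

variable (k : Type*) [CommRing k] {n : ℕ}

noncomputable def monomialIdeal (G : Finset (Fin n → ℕ)) : Ideal (MvPolynomial (Fin n) k) :=
  Ideal.span ((fun v => monomial (Finsupp.equivFunOnFinite.symm v) 1) '' G)

variable {k}

theorem mem_monomialIdeal {G : Finset (Fin n → ℕ)} {x : MvPolynomial (Fin n) k} :
    x ∈ monomialIdeal k G ↔ ∀ d ∈ x.support, ∃ v ∈ G, v ≤ ⇑d := by
  rw [monomialIdeal, ← Set.image_image (fun s => monomial s (1 : k)),
    mem_ideal_span_monomial_image]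
  simp only [Set.exists_mem_image, Finset.mem_coe, Finsupp.le_def, Pi.le_def,
    Finsupp.coe_equivFunOnFinite_symm]

theorem monomialIdeal_empty : monomialIdeal k (∅ : Finset (Fin n → ℕ)) = ⊥ := by
  simp [monomialIdeal]

theorem monomialIdeal_eq_top {G : Finset (Fin n → ℕ)} (h : 0 ∈ G) : monomialIdeal k G = ⊤ :=
  Ideal.eq_top_of_isUnit_mem _ (Ideal.subset_span ⟨0, h, by
    dsimp only
    rw [show Finsupp.equivFunOnFinite.symm 0 = 0 from Finsupp.ext fun _ => rfl, monomial_zero',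
      C_1]⟩) isUnit_one

theorem monomialIdeal_insert (u : Fin n → ℕ) (G : Finset (Fin n → ℕ)) :
    monomialIdeal k (insert u G) =
      monomialIdeal k G ⊔ Ideal.span {monomial (Finsupp.equivFunOnFinite.symm u) 1} := by
  rw [monomialIdeal, Finset.coe_insert, Set.image_insert_eq, Ideal.span_insert, sup_comm]
  rfl

theorem monomialIdeal_colon_monomial (u : Fin n → ℕ) (G : Finset (Fin n → ℕ)) :
    (monomialIdeal k G).colon {monomial (Finsupp.equivFunOnFinite.symm u) 1} =
      monomialIdeal k (G.image fun v => (v ⊔ u) - u) := by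
  ext x
  rw [Submodule.mem_colon_singleton, smul_eq_mul, mem_monomialIdeal, mem_monomialIdeal,
    support_mul_monomial_one]
  -- `(v ⊔ u) - u ≤ d ↔ v ≤ d + u`
  simp [tsub_le_iff_right]

end MonomialIdeal

section LcmLattice

variable {n : ℕ}

def lcmLattice (G : Finset (Fin n → ℕ)) : Set (Fin n → ℕ) :=
  {v | ∃ B ⊆ G, v = B.sup id}

/-- `rk (lcm G) ≥ K` in the lcm lattice of `G`. -/
def HasLcmChain (G : Finset (Fin n → ℕ)) (K : ℕ) : Prop :=
  ∃ c : Fin (K + 1) → (Fin n → ℕ),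
    StrictMono c ∧ (∀ j, c j ∈ lcmLattice G) ∧ c 0 = 0 ∧ c (Fin.last K) = G.sup id

theorem lcmLattice_mono {G' G : Finset (Fin n → ℕ)} (h : G' ⊆ G) :
    lcmLattice G' ⊆ lcmLattice G := by
  rintro _ ⟨B, hB, rfl⟩
  exact ⟨B, hB.trans h, rfl⟩

theorem zero_mem_lcmLattice (G : Finset (Fin n → ℕ)) : 0 ∈ lcmLattice G :=
  ⟨∅, Finset.empty_subset G, rfl⟩

theorem sup_mem_lcmLattice (G : Finset (Fin n → ℕ)) : G.sup id ∈ lcmLattice G :=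
  ⟨G, subset_rfl, rfl⟩

theorem mem_lcmLattice_image {ι : Type*} {T : Finset ι} {f : ι → Fin n → ℕ} {v : Fin n → ℕ} :
    v ∈ lcmLattice (T.image f) ↔ ∃ B ⊆ T, v = B.sup f := by
  simp [lcmLattice, Finset.subset_image_iff, Finset.sup_image]

theorem hasLcmChain_empty : HasLcmChain (∅ : Finset (Fin n → ℕ)) 0 :=
  ⟨fun _ => 0, Subsingleton.strictMono (α := Fin 1) _, fun _ => zero_mem_lcmLattice ∅, rfl, rfl⟩

theorem HasLcmChain.snoc {G' G : Finset (Fin n → ℕ)} {K : ℕ} (h : HasLcmChain G' K)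
    (hsub : G' ⊆ G) (hlt : G'.sup id < G.sup id) : HasLcmChain G (K + 1) := by
  obtain ⟨c, hc, hmem, h0, hlast⟩ := h
  refine ⟨Fin.snoc c (G.sup id), ?_, ?_, by simpa using h0, by simp⟩
  · rw [← Fin.insertNth_last', Fin.strictMono_insertNth_iff]
    refine ⟨hc, fun i _ => ?_, fun i hi => absurd hi (Fin.castSucc_lt_last i).not_ge⟩
    exact (hc.monotone (Fin.le_last i)).trans_lt (hlast ▸ hlt)
  · refine Fin.lastCases (by simpa using sup_mem_lcmLattice G) fun j => ?_
    simpa using lcmLattice_mono hsub (hmem j)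

theorem HasLcmChain.exists_of_subset {G' G : Finset (Fin n → ℕ)} {K : ℕ} (h : HasLcmChain G' K)
    (hsub : G' ⊆ G) : ∃ K' ≥ K, HasLcmChain G K' := by
  obtain hs | hlt := (Finset.sup_mono (f := id) hsub).eq_or_lt
  · obtain ⟨c, hc, hmem, h0, hlast⟩ := h
    exact ⟨K, le_rfl, c, hc, fun j => lcmLattice_mono hsub (hmem j), h0, hlast.trans hs⟩
  · exact ⟨K + 1, K.le_succ, h.snoc hsub hlt⟩

theorem hasLcmChain_one {G : Finset (Fin n → ℕ)} {u : Fin n → ℕ} (hu : u ∈ G) (hu0 : u ≠ 0) :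
    HasLcmChain G 1 :=
  hasLcmChain_empty.snoc (Finset.empty_subset G)
    (zero_le.lt_of_ne (Ne.symm hu0) |>.trans_le (Finset.le_sup (f := id) hu))

theorem sup_tsub_add_eq_sup_insert (u : Fin n → ℕ) (B : Finset (Fin n → ℕ)) :
    B.sup (fun v => (v ⊔ u) - u) + u = (insert u B).sup id := by
  apply le_antisymm
  · have hu : u ≤ (insert u B).sup id := Finset.le_sup (f := id) (Finset.mem_insert_self u B)
    refine (add_le_add_left (Finset.sup_le fun v hv => tsub_le_tsub_right ?_ u) u).trans
      (tsub_add_cancel_of_le hu).le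
    exact sup_le (Finset.le_sup (f := id) (Finset.mem_insert_of_mem hv)) hu
  · refine Finset.sup_le fun v hv => ?_
    obtain rfl | hv := Finset.mem_insert.1 hv
    · exact le_add_self
    · exact (le_sup_left.trans le_tsub_add).trans
        (add_le_add_left (Finset.le_sup (f := fun v => (v ⊔ u) - u) hv) u)

theorem HasLcmChain.of_colon {G : Finset (Fin n → ℕ)} {u : Fin n → ℕ} {K : ℕ} (hu : u ∈ G)
    (hu0 : u ≠ 0) (h : HasLcmChain ((G.erase u).image fun v => (v ⊔ u) - u) K) :
    HasLcmChain G (K + 1) := by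
  obtain ⟨c, hc, hmem, h0, hlast⟩ := h
  have hu_pos : 0 < u := zero_le.lt_of_ne (Ne.symm hu0)
  refine ⟨Fin.cons 0 fun j => c j + u, ?_, ?_, rfl, ?_⟩
  · exact Fin.strictMono_cons.2 ⟨fun j => hu_pos.trans_le le_add_self, hc.add_const u⟩
  · refine Fin.cases (zero_mem_lcmLattice G) fun j => ?_
    obtain ⟨B, hB, hcj⟩ := mem_lcmLattice_image.1 (hmem j)
    refine ⟨insert u B, Finset.insert_subset hu (hB.trans (Finset.erase_subset u G)), ?_⟩
    rw [Fin.cons_succ, hcj, sup_tsub_add_eq_sup_insert]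
  · rw [← Fin.succ_last, Fin.cons_succ, hlast, Finset.sup_image, Function.id_comp,
      sup_tsub_add_eq_sup_insert, Finset.insert_erase hu]

end LcmLattice

theorem nonempty_finFreeResolution_monomialIdeal (k : Type*) [CommRing k] {n : ℕ}
    (G : Finset (Fin n → ℕ)) (N : ℕ) (hN : ∀ K, HasLcmChain G K → K ≤ N) :
    Nonempty (FinFreeResolution (MvPolynomial (Fin n) k)
      (MvPolynomial (Fin n) k ⧸ monomialIdeal k G) N) := by
  induction hcard : G.card using Nat.strong_induction_on generalizing G N with
  | _ s ih =>
  by_cases h0 : 0 ∈ G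
  · rw [monomialIdeal_eq_top h0]
    exact ⟨FinFreeResolution.ofSubsingleton.ofLE N.zero_le⟩
  obtain rfl | ⟨u, hu⟩ := G.eq_empty_or_nonempty
  · rw [monomialIdeal_empty]
    exact ⟨((FinFreeResolution.self _).congr (Submodule.quotEquivOfEqBot ⊥ rfl).symm).ofLE
      N.zero_le⟩
  have hu0 : u ≠ 0 := ne_of_mem_of_not_mem hu h0
  have hN1 : 1 ≤ N := hN 1 (hasLcmChain_one hu hu0)
  obtain ⟨F⟩ := ih _ (hcard ▸ Finset.card_erase_lt_of_mem hu) (G.erase u) N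
    (fun K hK => by
      obtain ⟨K', hKK', hK'⟩ := hK.exists_of_subset (G.erase_subset u)
      exact hKK'.trans (hN K' hK')) rfl
  obtain ⟨F'⟩ := ih _ (hcard ▸ Finset.card_image_le.trans_lt (Finset.card_erase_lt_of_mem hu))
    ((G.erase u).image fun v => (v ⊔ u) - u) (N - 1)
    (fun K hK => by have := hN _ (hK.of_colon hu hu0); omega) rfl
  have hses := Ideal.exists_exact_quotient_colon (monomialIdeal k (G.erase u))
    (monomial (Finsupp.equivFunOnFinite.symm u) 1)
  rw [monomialIdeal_colon_monomial, ← monomialIdeal_insert, Finset.insert_erase hu] at hses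
  obtain ⟨φ, ρ, hφ, hρ, hφρ⟩ := hses
  obtain ⟨C⟩ := F'.nonempty_of_exact F hφ hρ hφρ
  exact ⟨C.ofLE (by omega)⟩

theorem le_apply_last_of_strictMono {K : ℕ} {f : Fin (K + 1) → ℕ} (hf : StrictMono f) :
    K ≤ f (Fin.last K) := by
  suffices ∀ j : Fin (K + 1), (j : ℕ) ≤ f j from this (Fin.last K)
  refine Fin.induction (Nat.zero_le _) fun j ih => ?_
  have := hf (Fin.castSucc_lt_succ (i := j))
  simp only [Fin.val_succ, Fin.val_castSucc] at ih ⊢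
  omega

theorem projdim_le_rank_lcmLattice {k : Type*} [Field k] {n r : ℕ}
    (a : Fin r → (Fin n → ℕ))
    (A : Finset (Fin r)) :
    let S := MvPolynomial (Fin n) k
    let m : Fin n → ℕ := A.sup a
    let L : Set (Fin n → ℕ) := {v | ∃ B : Finset (Fin r), v = B.sup a}
    let rkm : ℕ := sSup {K : ℕ | ∃ c : Fin (K + 1) → (Fin n → ℕ),
      StrictMono c ∧ (∀ j, c j ∈ L) ∧ c 0 = 0 ∧ c (Fin.last K) = m}
    let J : Ideal S := Ideal.span
      ((fun i => monomial (Finsupp.equivFunOnFinite.symm (a i)) (1 : k)) ''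
        {i : Fin r | a i ≤ m})
    ∃ (rnk : ℕ → ℕ) (D : ∀ i, Matrix (Fin (rnk i)) (Fin (rnk (i + 1))) S)
      (π : (Fin (rnk 0) → S) →ₗ[S] (S ⧸ J)),
      (∀ i, rkm < i → rnk i = 0) ∧
      Function.Surjective π ∧
      LinearMap.ker π = LinearMap.range (D 0).mulVecLin ∧
      ∀ i, LinearMap.ker (D i).mulVecLin = LinearMap.range (D (i + 1)).mulVecLin := by
  classical
  intro S m L rkm J
  set T := Finset.univ.filter fun i => a i ≤ m
  have hJ : J = monomialIdeal k (T.image a) := by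
    rw [monomialIdeal, Finset.coe_image, Set.image_image, Finset.coe_filter]
    simp only [Finset.mem_univ, true_and]
    rfl
  have hsup : (T.image a).sup id = m := by
    rw [Finset.sup_image, Function.id_comp]
    exact le_antisymm (Finset.sup_le fun i hi => (Finset.mem_filter.1 hi).2)
      (Finset.sup_le fun i hi => Finset.le_sup (Finset.mem_filter.2
        ⟨Finset.mem_univ i, Finset.le_sup hi⟩))
  have hbdd : BddAbove {K : ℕ | ∃ c : Fin (K + 1) → (Fin n → ℕ),
      StrictMono c ∧ (∀ j, c j ∈ L) ∧ c 0 = 0 ∧ c (Fin.last K) = m} := by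
    refine ⟨∑ t, m t, fun K ⟨c, hc, _, _, hlast⟩ => ?_⟩
    exact hlast ▸ le_apply_last_of_strictMono (Fintype.sum_strictMono.comp hc)
  have hN (K : ℕ) : HasLcmChain (T.image a) K → K ≤ rkm := by
    rintro ⟨c, hc, hmem, h0, hlast⟩
    refine le_csSup hbdd ⟨c, hc, fun j => ?_, h0, hlast.trans hsup⟩
    obtain ⟨B, -, hB⟩ := mem_lcmLattice_image.1 (hmem j)
    exact ⟨B, hB⟩
  obtain ⟨F⟩ := nonempty_finFreeResolution_monomialIdeal k (T.image a) rkm hN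
  rw [hJ]
  exact F.exists_matrix
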